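/- arXiv:0711.0871 — 2 statements merged into one kernel-verified Lean document; each statement's English description precedes it below -/
import Mathlib

section
/- Let ⊴ be a partial order on Ŵ satisfying the compatibility conditions with simple reflections (in particular [w,ws] = {w,ws} when w ⊴ ws, and: x ⊴ xs and y ⊴ xs imply ys ⊴ xs; xs ⊴ x and xs ⊴ y imply xs ⊴ ys). Then for any open subset Ω ⊆ Ŵ (i.e., upward closed under ⊴) and any simple reflection s ∈ Ŝ, the set Ω ∪ Ωs is also open. -/
/-- Let `⊴` (written `le`) be a partial order on `Ŵ` satisfying the
compatibility conditions with simple reflections: elements `w` and `ws` are comparable,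
`[w,ws] = {w,ws}` when `w ⊴ ws`, and property (3): `x ⊴ xs ∧ y ⊴ xs → ys ⊴ xs` and
`xs ⊴ x ∧ xs ⊴ y → xs ⊴ ys`.  Then for any open (upward closed) subset `Ω ⊆ Ŵ` and any
simple reflection `s ∈ Ŝ`, the set `Ω ∪ Ωs` is also open. -/
theorem open_union_openS
    {W : Type*} [Group W]
    (Shat : Set W) (le : W → W → Prop)
    (hrefl : ∀ x, le x x)
    (hantisymm : ∀ x y, le x y → le y x → x = y)
    (htrans : ∀ x y z, le x y → le y z → le x z)
    (hinvol : ∀ s ∈ Shat, s * s = 1)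
    (hcomparable : ∀ (w : W), ∀ s ∈ Shat, le w (w * s) ∨ le (w * s) w)
    (hinterval : ∀ (w : W), ∀ s ∈ Shat, le w (w * s) →
        ∀ z, le w z → le z (w * s) → z = w ∨ z = w * s)
    (hthree : ∀ (x y : W), ∀ s ∈ Shat,
        (le x (x * s) → le y (x * s) → le (y * s) (x * s)) ∧
        (le (x * s) x → le (x * s) y → le (x * s) (y * s)))
    (Ω : Set W) (hΩ : ∀ x ∈ Ω, ∀ y, le x y → y ∈ Ω)
    (s : W) (hs : s ∈ Shat) :
    ∀ x ∈ Ω ∪ (fun w => w * s) '' Ω, ∀ y, le x y → y ∈ Ω ∪ (fun w => w * s) '' Ω := by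

  intro x hx y hxy
  have hss : ∀ a : W, a * s * s = a := by
    intro a; rw [mul_assoc, hinvol s hs, mul_one]
  rcases hx with hx | ⟨w, hw, rfl⟩
  · exact Or.inl (hΩ x hx y hxy)
  · simp only at hxy ⊢
    rcases hcomparable w s hs with h1 | h1
    · exact Or.inl (hΩ w hw y (htrans _ _ _ h1 hxy))
    · rcases hcomparable (y * s) s hs with h2 | h2
      · -- le (y*s) (y*s*s) = le (y*s) y
        rw [hss] at h2
        -- apply hthree part 1 with x := y*s : le z (y*s*s) → le (z*s) (y*s*s)
        have := (hthree (y * s) (w * s) s hs).1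
        rw [hss] at this
        have hw_y : le (w * s * s) y := this h2 hxy
        rw [hss] at hw_y
        exact Or.inl (hΩ w hw y hw_y)
      · rw [hss] at h2
        -- y ⊴ ys; use hthree part 1 with x := y : le z (y*s) → le (z*s) (y*s)
        have := (hthree y (w * s) s hs).1
        have hws_ys : le (w * s) (y * s) := htrans _ _ _ hxy h2
        have hw_ys : le (w * s * s) (y * s) := this h2 hws_ys
        rw [hss] at hw_ys
        exact Or.inr ⟨y * s, hΩ w hw _ hw_ys, hss y⟩
end

section
/- Let B be a wall in the ŵ-orbit 𝒜^s with neighbouring alcoves B₋ ⊂ H⁻ and B₊ ⊂ H⁺ (H the hyperplane containing B), and β ∈ R⁺. If β↑B = B then β↑B₋ = B₊; and if β↑B ≠ B then {β↑B₋, β↑B₊} = {(β↑B)₋, (β↑B)₊}. -/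
/-! Alcove geometry for an affine hyperplane arrangement.  `E` plays the role of `V* ⊗ ℝ`,
positive roots are linear functionals on `E`, and `coroot β ∈ E` is the coroot `β∨`. -/

section AlcoveGeometry

variable {E : Type*} [AddCommGroup E] [Module ℝ E]

/-- `x` and `y` lie in the same facet of the affine arrangement of hyperplanes
`H_{α,n} = {α = n}` (`α ∈ R⁺`, `n ∈ ℤ`): they lie on the same side of (or on) each
hyperplane. -/
def SameFacet (Rp : Set (E →ₗ[ℝ] ℝ)) (x y : E) : Prop :=
  ∀ α ∈ Rp, ∀ n : ℤ, ((α x < n ↔ α y < n) ∧ (α x = n ↔ α y = n))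

/-- `A` is an alcove: the facet of a point lying on no hyperplane. -/
def IsAlcove (Rp : Set (E →ₗ[ℝ] ℝ)) (A : Set E) : Prop :=
  ∃ x : E, (∀ α ∈ Rp, ∀ n : ℤ, α x ≠ n) ∧ A = {y | SameFacet Rp x y}

/-- `B` is a wall of type `γ`, contained in the single hyperplane `H_{γ,m}`. -/
def IsWall (Rp : Set (E →ₗ[ℝ] ℝ)) (γ : E →ₗ[ℝ] ℝ) (m : ℤ) (B : Set E) : Prop :=
  γ ∈ Rp ∧ ∃ x : E, γ x = m ∧ (∀ α ∈ Rp, ∀ n : ℤ, α x = n → α = γ ∧ n = m) ∧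
    B = {y | SameFacet Rp x y}

/-- `B` lies in the closure of `A` (combinatorially): wherever `B` is strictly on one side
of a hyperplane, so is `A`. -/
def Adjacent (Rp : Set (E →ₗ[ℝ] ℝ)) (A B : Set E) : Prop :=
  (∀ α ∈ Rp, ∀ n : ℤ, (∀ b ∈ B, α b < n) → ∀ a ∈ A, α a < n) ∧
  (∀ α ∈ Rp, ∀ n : ℤ, (∀ b ∈ B, (n : ℝ) < α b) → ∀ a ∈ A, (n : ℝ) < α a)

/-- `A = B₋`, the alcove with wall `B ⊆ H_{γ,m}` lying in `H_{γ,m}⁻`. -/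
def IsLower (Rp : Set (E →ₗ[ℝ] ℝ)) (γ : E →ₗ[ℝ] ℝ) (m : ℤ) (B A : Set E) : Prop :=
  IsAlcove Rp A ∧ Adjacent Rp A B ∧ ∀ a ∈ A, γ a < m

/-- `A = B₊`, the alcove with wall `B ⊆ H_{γ,m}` lying in `H_{γ,m}⁺`. -/
def IsUpper (Rp : Set (E →ₗ[ℝ] ℝ)) (γ : E →ₗ[ℝ] ℝ) (m : ℤ) (B A : Set E) : Prop :=
  IsAlcove Rp A ∧ Adjacent Rp A B ∧ ∀ a ∈ A, (m : ℝ) < γ a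

/-- The affine reflection `s_{β,n}` in the hyperplane `H_{β,n}`. -/
def areflect (coroot : (E →ₗ[ℝ] ℝ) → E) (β : E →ₗ[ℝ] ℝ) (n : ℤ) (y : E) : E :=
  y - (β y - n) • coroot β

/-- `n` is the smallest integer such that the facet `F` lies on or below `H_{β,n}`; thus
`β↑F = s_{β,n}(F)`. -/
def IsMinLevel (β : E →ₗ[ℝ] ℝ) (F : Set E) (n : ℤ) : Prop :=
  (∀ y ∈ F, β y ≤ n) ∧ ¬ (∀ y ∈ F, β y ≤ ((n - 1 : ℤ) : ℝ))

end AlcoveGeometry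

section WallHelpers

variable {E : Type*} [AddCommGroup E] [Module ℝ E]
variable {Rp : Set (E →ₗ[ℝ] ℝ)} {coroot : (E →ₗ[ℝ] ℝ) → E}

lemma sf_refl (x : E) : SameFacet Rp x x := fun _ _ _ => ⟨Iff.rfl, Iff.rfl⟩

lemma sf_symm {x y : E} (h : SameFacet Rp x y) : SameFacet Rp y x :=
  fun α hα n => ⟨(h α hα n).1.symm, (h α hα n).2.symm⟩

lemma sf_trans {x y z : E} (h : SameFacet Rp x y) (h' : SameFacet Rp y z) :
    SameFacet Rp x z :=
  fun α hα n => ⟨(h α hα n).1.trans (h' α hα n).1, (h α hα n).2.trans (h' α hα n).2⟩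

lemma facet_eq {x y : E} (h : SameFacet Rp x y) :
    {z | SameFacet Rp x z} = {z | SameFacet Rp y z} := by
  ext z
  exact ⟨fun hz => sf_trans (sf_symm h) hz, fun hz => sf_trans h hz⟩

lemma gt_iff_aux {a b c : ℝ} (h1 : a < c ↔ b < c) (h2 : a = c ↔ b = c) :
    c < a ↔ c < b := by
  constructor <;> intro h
  · rcases lt_trichotomy b c with h' | h' | h'
    · exact absurd (h1.mpr h') (by linarith)
    · exact absurd (h2.mpr h') (by linarith)
    · exact h'
  · rcases lt_trichotomy a c with h' | h' | h'
    · exact absurd (h1.mp h') (by linarith)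
    · exact absurd (h2.mp h') (by linarith)
    · exact h'

lemma apply_areflect (α β : E →ₗ[ℝ] ℝ) (n : ℤ) (y : E) :
    α (areflect coroot β n y) =
      (α - α (coroot β) • β) y + α (coroot β) * n := by
  simp only [areflect, map_sub, map_smul, smul_eq_mul, LinearMap.sub_apply,
    LinearMap.smul_apply]
  ring

lemma beta_areflect {β : E →ₗ[ℝ] ℝ} (h2β : β (coroot β) = 2) (n : ℤ) (y : E) :
    β (areflect coroot β n y) = 2 * n - β y := by
  rw [apply_areflect, h2β]
  simp only [LinearMap.sub_apply, LinearMap.smul_apply, smul_eq_mul]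
  ring

lemma areflect_invol {β : E →ₗ[ℝ] ℝ} (h2β : β (coroot β) = 2) (n : ℤ) (y : E) :
    areflect coroot β n (areflect coroot β n y) = y := by
  have h : β (areflect coroot β n y) - n = -(β y - n) := by
    rw [beta_areflect h2β]; ring
  show areflect coroot β n y - (β (areflect coroot β n y) - n) • coroot β = y
  rw [h, areflect, neg_smul, sub_neg_eq_add]
  abel

lemma sf_areflect
    (hint : ∀ α ∈ Rp, ∀ β ∈ Rp, ∃ z : ℤ, α (coroot β) = z)
    (hstab : ∀ α ∈ Rp, ∀ β ∈ Rp,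
      (α - α (coroot β) • β ∈ Rp) ∨ (-(α - α (coroot β) • β) ∈ Rp))
    {β : E →ₗ[ℝ] ℝ} (hβ : β ∈ Rp) (n : ℤ) {x y : E} (h : SameFacet Rp x y) :
    SameFacet Rp (areflect coroot β n x) (areflect coroot β n y) := by
  intro α hα k
  obtain ⟨c, hc⟩ := hint α hα β hβ
  have hx : α (areflect coroot β n x) = (α - (c : ℝ) • β) x + c * n := by
    rw [apply_areflect, hc]
  have hy : α (areflect coroot β n y) = (α - (c : ℝ) • β) y + c * n := by
    rw [apply_areflect, hc]
  have hs := hstab α hα β hβ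
  rw [hc] at hs
  rcases hs with h' | h'
  · have key := h _ h' (k - c * n)
    push_cast at key
    rw [hx, hy]
    exact ⟨⟨fun hh => by linarith [key.1.mp (by linarith)],
            fun hh => by linarith [key.1.mpr (by linarith)]⟩,
           ⟨fun hh => by linarith [key.2.mp (by linarith : (α - (c:ℝ) • β) x = k - c * n)],
            fun hh => by linarith [key.2.mpr (by linarith : (α - (c:ℝ) • β) y = k - c * n)]⟩⟩
  · have key := h _ h' (c * n - k)
    push_cast at key
    simp only [LinearMap.neg_apply] at key
    have k3 := gt_iff_aux key.1 key.2
    rw [hx, hy]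
    exact ⟨⟨fun hh => by linarith [k3.mp (by linarith)],
            fun hh => by linarith [k3.mpr (by linarith)]⟩,
           ⟨fun hh => by linarith [key.2.mp (by linarith : -((α - (c:ℝ) • β) x) = c * n - k)],
            fun hh => by linarith [key.2.mpr (by linarith : -((α - (c:ℝ) • β) y) = c * n - k)]⟩⟩

lemma image_facet
    (hint : ∀ α ∈ Rp, ∀ β ∈ Rp, ∃ z : ℤ, α (coroot β) = z)
    (hstab : ∀ α ∈ Rp, ∀ β ∈ Rp,
      (α - α (coroot β) • β ∈ Rp) ∨ (-(α - α (coroot β) • β) ∈ Rp))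
    {β : E →ₗ[ℝ] ℝ} (hβ : β ∈ Rp) (h2β : β (coroot β) = 2) (n : ℤ) (x : E) :
    areflect coroot β n '' {z | SameFacet Rp x z} =
      {z | SameFacet Rp (areflect coroot β n x) z} := by
  ext z
  constructor
  · rintro ⟨y, hy, rfl⟩
    exact sf_areflect hint hstab hβ n hy
  · intro hz
    refine ⟨areflect coroot β n z, ?_, areflect_invol h2β n z⟩
    have h := sf_areflect hint hstab hβ n (hz : SameFacet Rp (areflect coroot β n x) z)
    rwa [areflect_invol h2β] at h

lemma alcove_image
    (hint : ∀ α ∈ Rp, ∀ β ∈ Rp, ∃ z : ℤ, α (coroot β) = z)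
    (hstab : ∀ α ∈ Rp, ∀ β ∈ Rp,
      (α - α (coroot β) • β ∈ Rp) ∨ (-(α - α (coroot β) • β) ∈ Rp))
    {β : E →ₗ[ℝ] ℝ} (hβ : β ∈ Rp) (h2β : β (coroot β) = 2) (n : ℤ)
    {A : Set E} (hA : IsAlcove Rp A) :
    IsAlcove Rp (areflect coroot β n '' A) := by
  obtain ⟨a, ha, rfl⟩ := hA
  refine ⟨areflect coroot β n a, ?_, image_facet hint hstab hβ h2β n a⟩
  intro α hα k hk
  obtain ⟨c, hc⟩ := hint α hα β hβ
  rw [apply_areflect, hc] at hk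
  have hs := hstab α hα β hβ
  rw [hc] at hs
  rcases hs with h' | h'
  · exact ha _ h' (k - c * n) (by push_cast; linarith)
  · exact ha _ h' (c * n - k)
      (by simp only [LinearMap.neg_apply]; push_cast; linarith)

lemma adjacent_image
    (hint : ∀ α ∈ Rp, ∀ β ∈ Rp, ∃ z : ℤ, α (coroot β) = z)
    (hstab : ∀ α ∈ Rp, ∀ β ∈ Rp,
      (α - α (coroot β) • β ∈ Rp) ∨ (-(α - α (coroot β) • β) ∈ Rp))
    {β : E →ₗ[ℝ] ℝ} (hβ : β ∈ Rp) (n : ℤ) {A B : Set E}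
    (hadj : Adjacent Rp A B) :
    Adjacent Rp (areflect coroot β n '' A) (areflect coroot β n '' B) := by
  constructor
  · rintro α hα k hb a' ⟨a, ha, rfl⟩
    obtain ⟨c, hc⟩ := hint α hα β hβ
    have hs := hstab α hα β hβ
    rw [hc] at hs
    rcases hs with h' | h'
    · have hb' : ∀ b ∈ B, (α - (c : ℝ) • β) b < ((k - c * n : ℤ) : ℝ) := by
        intro b hbB
        have h := hb _ ⟨b, hbB, rfl⟩
        rw [apply_areflect, hc] at h
        push_cast
        linarith
      have h := hadj.1 _ h' (k - c * n) hb' a ha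
      rw [apply_areflect, hc]
      push_cast at h
      linarith
    · have hb' : ∀ b ∈ B, ((c * n - k : ℤ) : ℝ) < (-(α - (c : ℝ) • β)) b := by
        intro b hbB
        have h := hb _ ⟨b, hbB, rfl⟩
        rw [apply_areflect, hc] at h
        simp only [LinearMap.neg_apply]
        push_cast
        linarith
      have h := hadj.2 _ h' (c * n - k) hb' a ha
      simp only [LinearMap.neg_apply] at h
      rw [apply_areflect, hc]
      push_cast at h
      linarith
  · rintro α hα k hb a' ⟨a, ha, rfl⟩
    obtain ⟨c, hc⟩ := hint α hα β hβ
    have hs := hstab α hα β hβ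
    rw [hc] at hs
    rcases hs with h' | h'
    · have hb' : ∀ b ∈ B, ((k - c * n : ℤ) : ℝ) < (α - (c : ℝ) • β) b := by
        intro b hbB
        have h := hb _ ⟨b, hbB, rfl⟩
        rw [apply_areflect, hc] at h
        push_cast
        linarith
      have h := hadj.2 _ h' (k - c * n) hb' a ha
      rw [apply_areflect, hc]
      push_cast at h
      linarith
    · have hb' : ∀ b ∈ B, (-(α - (c : ℝ) • β)) b < ((c * n - k : ℤ) : ℝ) := by
        intro b hbB
        have h := hb _ ⟨b, hbB, rfl⟩
        rw [apply_areflect, hc] at h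
        simp only [LinearMap.neg_apply]
        push_cast
        linarith
      have h := hadj.1 _ h' (c * n - k) hb' a ha
      simp only [LinearMap.neg_apply] at h
      rw [apply_areflect, hc]
      push_cast at h
      linarith

lemma minlevel_eq {β : E →ₗ[ℝ] ℝ} {F : Set E} {x0 : E} (hx0 : x0 ∈ F) {n n' : ℤ}
    (hub : ∀ y ∈ F, β y ≤ (n : ℝ)) (hlb : ∀ y ∈ F, ((n - 1 : ℤ) : ℝ) < β y)
    (h : IsMinLevel β F n') : n' = n := by
  obtain ⟨h1, h2⟩ := h
  push_neg at h2
  obtain ⟨y, hy, hy2⟩ := h2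
  have a1 : ((n - 1 : ℤ) : ℝ) < (n' : ℝ) := lt_of_lt_of_le (hlb x0 hx0) (h1 x0 hx0)
  have a2 : ((n' - 1 : ℤ) : ℝ) < (n : ℝ) := lt_of_lt_of_le hy2 (hub y hy)
  have b1 : (n - 1 : ℤ) < n' := by exact_mod_cast a1
  have b2 : (n' - 1 : ℤ) < n := by exact_mod_cast a2
  omega

lemma alcove_uniq {γ : E →ₗ[ℝ] ℝ} {m : ℤ} (hγ : γ ∈ Rp) {x : E}
    (hxw : ∀ α ∈ Rp, ∀ k : ℤ, α x = k → α = γ ∧ k = m)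
    {A A' : Set E} (hA : IsAlcove Rp A) (hA' : IsAlcove Rp A')
    (hadj : Adjacent Rp A {y | SameFacet Rp x y})
    (hadj' : Adjacent Rp A' {y | SameFacet Rp x y})
    (hside : ∀ a ∈ A, ∀ a' ∈ A', (γ a < (m : ℝ) ↔ γ a' < (m : ℝ))) : A = A' := by
  obtain ⟨a, ha, rfl⟩ := hA
  obtain ⟨a', ha', rfl⟩ := hA'
  have haA : a ∈ {y | SameFacet Rp a y} := sf_refl a
  have haA' : a' ∈ {y | SameFacet Rp a' y} := sf_refl a'
  apply facet_eq
  intro α hα k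
  refine ⟨?_, iff_of_false (ha α hα k) (ha' α hα k)⟩
  by_cases hcase : α = γ ∧ k = m
  · obtain ⟨rfl, rfl⟩ := hcase
    exact hside a haA a' haA'
  · have hxk : α x ≠ (k : ℝ) := fun h => hcase (hxw α hα k h)
    rcases lt_trichotomy (α x) ((k : ℤ) : ℝ) with h | h | h
    · have hb : ∀ b ∈ {y | SameFacet Rp x y}, α b < ((k : ℤ) : ℝ) :=
        fun b hb => ((hb : SameFacet Rp x b) α hα k).1.mp h
      exact iff_of_true (hadj.1 α hα k hb a haA) (hadj'.1 α hα k hb a' haA')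
    · exact absurd h hxk
    · have hb : ∀ b ∈ {y | SameFacet Rp x y}, ((k : ℤ) : ℝ) < α b := fun b hb =>
        (gt_iff_aux ((hb : SameFacet Rp x b) α hα k).1
          ((hb : SameFacet Rp x b) α hα k).2).mp h
      exact iff_of_false (not_lt.mpr (le_of_lt (hadj.2 α hα k hb a haA)))
        (not_lt.mpr (le_of_lt (hadj'.2 α hα k hb a' haA')))

end WallHelpers

/-- Lemma on walls and `β↑`.  Let `B` be a wall with neighbouring
alcoves `B₋ = Am` and `B₊ = Ap`, and let `β ∈ R⁺`.  Then:
(1) if `β↑B = B` then `β↑B₋ = B₊`;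
(2) if `β↑B ≠ B` then `{β↑B₋, β↑B₊} = {(β↑B)₋, (β↑B)₊}`.
Here `β↑F = s_{β,n}(F)` with `n` the minimal level of `F` (`IsMinLevel`), and the root
system axioms (`h2`, `hint`, `hstab`) state `⟨β,β∨⟩ = 2`, integrality `⟨α,β∨⟩ ∈ ℤ`, and
stability of `R⁺ ∪ −R⁺` under the finite reflections. -/
theorem wall_reflection_lemma
    {E : Type*} [AddCommGroup E] [Module ℝ E]
    (Rp : Set (E →ₗ[ℝ] ℝ)) (coroot : (E →ₗ[ℝ] ℝ) → E)
    (h2 : ∀ α ∈ Rp, α (coroot α) = 2)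
    (hint : ∀ α ∈ Rp, ∀ β ∈ Rp, ∃ z : ℤ, α (coroot β) = z)
    (hstab : ∀ α ∈ Rp, ∀ β ∈ Rp,
        (α - α (coroot β) • β ∈ Rp) ∨ (-(α - α (coroot β) • β) ∈ Rp))
    (β : E →ₗ[ℝ] ℝ) (hβ : β ∈ Rp)
    (γ : E →ₗ[ℝ] ℝ) (m : ℤ) (B : Set E) (hB : IsWall Rp γ m B)
    (Am Ap : Set E) (hAm : IsLower Rp γ m B Am) (hAp : IsUpper Rp γ m B Ap)
    (n : ℤ) (hn : IsMinLevel β B n) :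
    ((areflect coroot β n '' B = B) →
        ∀ nm : ℤ, IsMinLevel β Am nm → areflect coroot β nm '' Am = Ap) ∧
    ((areflect coroot β n '' B ≠ B) →
        ∀ (γ' : E →ₗ[ℝ] ℝ) (m' : ℤ), IsWall Rp γ' m' (areflect coroot β n '' B) →
        ∀ C D : Set E,
          IsLower Rp γ' m' (areflect coroot β n '' B) C →
          IsUpper Rp γ' m' (areflect coroot β n '' B) D →
        ∀ nm np : ℤ, IsMinLevel β Am nm → IsMinLevel β Ap np →
          ({areflect coroot β nm '' Am, areflect coroot β np '' Ap} : Set (Set E)) =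
            {C, D}) := by
  obtain ⟨hγ, x, hγx, hxw, hBdef⟩ := hB
  subst hBdef
  have h2β : β (coroot β) = 2 := h2 β hβ
  set B := {y | SameFacet Rp x y} with hBset
  have hxB : x ∈ B := sf_refl x
  have hmemB : ∀ y ∈ B, SameFacet Rp x y := fun y hy => hy
  -- general lower bound on B
  have hlbB : ∀ y ∈ B, ((n - 1 : ℤ) : ℝ) < β y := by
    have h2' := hn.2
    push_neg at h2'
    obtain ⟨y0, hy0B, hy0⟩ := h2'
    intro y hy
    have e0 := hmemB y0 hy0B β hβ (n - 1)
    have e := hmemB y hy β hβ (n - 1)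
    have hx1 : ¬ β x < ((n - 1 : ℤ) : ℝ) := fun h => absurd (e0.1.mp h) (by linarith)
    have hx2 : ¬ β x = ((n - 1 : ℤ) : ℝ) := fun h => absurd (e0.2.mp h) (by linarith)
    rcases lt_trichotomy (β y) (((n - 1 : ℤ)) : ℝ) with h | h | h
    · exact absurd (e.1.mpr h) hx1
    · exact absurd (e.2.mpr h) hx2
    · exact h
  have hubB : ∀ y ∈ B, β y ≤ (n : ℝ) := hn.1
  constructor
  · -- Case 1 : β↑B = B
    intro hBB nm hnm
    have hAmlt : ∀ a ∈ Am, β a < (n : ℝ) := by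
      by_cases hix : ∃ k : ℤ, β x = (k : ℝ)
      · obtain ⟨k, hk⟩ := hix
        obtain ⟨hβγ, hkm⟩ := hxw β hβ k hk
        subst hβγ
        subst hkm
        have hBm : ∀ y ∈ B, β y = ((k : ℤ) : ℝ) := fun y hy => (hmemB y hy β hβ k).2.mp hγx
        have hnm' : n = k := minlevel_eq hxB (fun y hy => le_of_eq (hBm y hy))
            (fun y hy => by rw [hBm y hy]; push_cast; linarith) hn
        subst hnm'
        exact hAm.2.2
      · push_neg at hix
        have hBlt : ∀ y ∈ B, β y < (n : ℝ) := by
          intro y hy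
          rcases lt_or_eq_of_le (hubB y hy) with h | h
          · exact h
          · exact absurd ((hmemB y hy β hβ n).2.mpr h) (hix n)
        exact hAm.2.1.1 β hβ n hBlt
    have hAmgt : ∀ a ∈ Am, ((n - 1 : ℤ) : ℝ) < β a :=
      hAm.2.1.2 β hβ (n - 1) hlbB
    obtain ⟨am, ham, hAmdef⟩ := hAm.1
    have hamAm : am ∈ Am := by rw [hAmdef]; exact sf_refl am
    have hnm' : nm = n := minlevel_eq hamAm (fun a ha => le_of_lt (hAmlt a ha)) hAmgt hnm
    rw [hnm']
    have hAlc : IsAlcove Rp (areflect coroot β n '' Am) :=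
      alcove_image hint hstab hβ h2β n hAm.1
    have hAdj : Adjacent Rp (areflect coroot β n '' Am) B := by
      have h := adjacent_image hint hstab hβ n hAm.2.1
      rwa [hBB] at h
    obtain ⟨p, hp, hpdef⟩ := hAlc
    have hpmem : p ∈ areflect coroot β n '' Am := by rw [hpdef]; exact sf_refl p
    obtain ⟨a0, ha0, hpa0⟩ := hpmem
    have hpne : γ p ≠ (m : ℝ) := hp γ hγ m
    have hfacet : ∀ a ∈ areflect coroot β n '' Am, SameFacet Rp p a := by
      intro a ha
      rw [hpdef] at ha
      exact ha
    have hside : (m : ℝ) < γ p := by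
      rcases lt_trichotomy (γ p) ((m : ℤ) : ℝ) with h | h | h
      · exfalso
        have heq : areflect coroot β n '' Am = Am := by
          refine alcove_uniq hγ hxw ⟨p, hp, hpdef⟩ hAm.1 hAdj hAm.2.1 ?_
          intro a ha a' ha'
          exact iff_of_true ((hfacet a ha γ hγ m).1.mp h) (hAm.2.2 a' ha')
        have hpAm : p ∈ Am := heq ▸ (⟨a0, ha0, hpa0⟩ : p ∈ areflect coroot β n '' Am)
        have h1 := hAmlt p hpAm
        have h2 := hAmlt a0 ha0
        have h3 : β p = 2 * n - β a0 := by rw [← hpa0, beta_areflect h2β]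
        linarith
      · exact absurd h hpne
      · exact h
    refine alcove_uniq hγ hxw ⟨p, hp, hpdef⟩ hAp.1 hAdj hAp.2.1 ?_
    intro a ha a' ha'
    have hsf := hfacet a ha
    refine iff_of_false
      (not_lt.mpr (le_of_lt ((gt_iff_aux (hsf γ hγ m).1 (hsf γ hγ m).2).mp hside)))
      (not_lt.mpr (le_of_lt (hAp.2.2 a' ha')))
  · -- Case 2 : β↑B ≠ B
    intro hBne γ' m' hB' C D hC hD nm np hnm hnp
    have hix : ∀ k : ℤ, β x ≠ (k : ℝ) := by
      intro k hk
      obtain ⟨hβγ, hkm⟩ := hxw β hβ k hk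
      apply hBne
      subst hβγ
      subst hkm
      have hBm : ∀ y ∈ B, β y = ((k : ℤ) : ℝ) := fun y hy => (hmemB y hy β hβ k).2.mp hγx
      have hnmm : n = k := minlevel_eq hxB (fun y hy => le_of_eq (hBm y hy))
          (fun y hy => by rw [hBm y hy]; push_cast; linarith) hn
      subst hnmm
      ext z
      constructor
      · rintro ⟨y, hy, rfl⟩
        have hfix : areflect coroot β n y = y := by
          show y - (β y - n) • coroot β = y
          rw [hBm y hy]
          simp
        rwa [hfix]
      · intro hz
        exact ⟨z, hz, by show z - (β z - n) • coroot β = z; rw [hBm z hz]; simp⟩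
    have hBlt : ∀ y ∈ B, β y < (n : ℝ) := by
      intro y hy
      rcases lt_or_eq_of_le (hubB y hy) with h | h
      · exact h
      · exact absurd ((hmemB y hy β hβ n).2.mpr h) (hix n)
    have hml : ∀ A : Set E, IsAlcove Rp A → Adjacent Rp A B →
        ∀ n' : ℤ, IsMinLevel β A n' → n' = n := by
      intro A hA hadj n' h'
      obtain ⟨a, ha, hAdef⟩ := hA
      have haA : a ∈ A := by rw [hAdef]; exact sf_refl a
      exact minlevel_eq haA (fun y hy => le_of_lt (hadj.1 β hβ n hBlt y hy))
        (fun y hy => hadj.2 β hβ (n - 1) hlbB y hy) h'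
    have hnm' : nm = n := hml Am hAm.1 hAm.2.1 nm hnm
    have hnp' : np = n := hml Ap hAp.1 hAp.2.1 np hnp
    rw [hnm', hnp']
    obtain ⟨hγ', x', hx'm, hx'w, hB'def⟩ := hB'
    have hAlcm := alcove_image hint hstab hβ h2β n hAm.1
    have hAlcp := alcove_image hint hstab hβ h2β n hAp.1
    have hAdjm := adjacent_image hint hstab hβ n hAm.2.1
    have hAdjp := adjacent_image hint hstab hβ n hAp.2.1
    have hAmAp : Am ≠ Ap := by
      intro h
      obtain ⟨a, ha, hAdef⟩ := hAm.1
      have haA : a ∈ Am := by rw [hAdef]; exact sf_refl a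
      have h1 := hAm.2.2 a haA
      have h2 := hAp.2.2 a (h ▸ haA)
      linarith
    have hinj : Function.Injective (areflect coroot β n) :=
      Function.Involutive.injective (areflect_invol h2β n)
    have hne2 : areflect coroot β n '' Am ≠ areflect coroot β n '' Ap :=
      fun h => hAmAp (Set.image_injective.mpr hinj h)
    have hclass : ∀ A : Set E, IsAlcove Rp A →
        Adjacent Rp A (areflect coroot β n '' B) → A = C ∨ A = D := by
      intro A hA hadj
      obtain ⟨p, hp, hAdef⟩ := hA
      have hpA : p ∈ A := by rw [hAdef]; exact sf_refl p
      have hadj' : Adjacent Rp A {y | SameFacet Rp x' y} := by rwa [hB'def] at hadj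
      have hfacet : ∀ a ∈ A, SameFacet Rp p a := by
        intro a ha
        rw [hAdef] at ha
        exact ha
      rcases lt_trichotomy (γ' p) ((m' : ℤ) : ℝ) with h | h | h
      · left
        refine alcove_uniq hγ' hx'w ⟨p, hp, hAdef⟩ hC.1 hadj'
          (by have h := hC.2.1; rwa [hB'def] at h) ?_
        intro a ha a' ha'
        exact iff_of_true ((hfacet a ha γ' hγ' m').1.mp h) (hC.2.2 a' ha')
      · exact absurd h (hp γ' hγ' m')
      · right
        refine alcove_uniq hγ' hx'w ⟨p, hp, hAdef⟩ hD.1 hadj'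
          (by have h := hD.2.1; rwa [hB'def] at h) ?_
        intro a ha a' ha'
        have hsf := hfacet a ha
        exact iff_of_false
          (not_lt.mpr (le_of_lt ((gt_iff_aux (hsf γ' hγ' m').1 (hsf γ' hγ' m').2).mp h)))
          (not_lt.mpr (le_of_lt (hD.2.2 a' ha')))
    rcases hclass _ hAlcm hAdjm with h1 | h1 <;>
      rcases hclass _ hAlcp hAdjp with h2 | h2
    · exact absurd (h1.trans h2.symm) hne2
    · rw [h1, h2]
    · rw [h1, h2]
      exact Set.pair_comm D C
    · exact absurd (h1.trans h2.symm) hne2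
end
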